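/- Let c₀ ≥ 0, let U₁(y) = (1 + |y − c₀e₃|²)^{−1/2} on ℝ³ (where e₃ = (0,0,1)), and for λ > 0 let U₁^λ(y) = (λ/|y|) U₁(λ²y/|y|²) be its Kelvin transform. Then: (i) for every λ with 0 < λ < (1 + c₀²)^{1/2} and every y ∈ ℝ³ with |y| > λ, U₁(y) > U₁^λ(y); (ii) for every λ > (1 + c₀²)^{1/2} and every y ∈ ℝ³ with |y| > λ, U₁(y) < U₁^λ(y). -/

import Mathlib

open Metric Set MeasureTheory

noncomputable section

abbrev E3 := EuclideanSpace ℝ (Fin 3)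

/-- The Euclidean Laplacian on ℝ³. -/
noncomputable def lap (u : E3 → ℝ) (x : E3) : ℝ :=
  ∑ i : Fin 3, fderiv ℝ (fun y => fderiv ℝ u y (EuclideanSpace.single i 1)) x
    (EuclideanSpace.single i 1)

/-- The third standard basis vector of ℝ³. -/
noncomputable def e3 : E3 := EuclideanSpace.single 2 1

/-!
Writing `r = ‖y‖`, the inversion `y ↦ (λ²/r²) y` turns the bubble `(1 + ‖y - p‖²)^{-1/2}`
into a bubble again: a direct expansion of `‖(λ²/r²) y - p‖²` gives
`U^λ(y) = (1 + ‖y - p‖² + (1 + ‖p‖² - λ²)(r²/λ² - 1))^{-1/2}`.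
For `r > λ` the correction term has the sign of `1 + ‖p‖² - λ²`, and `t ↦ t^{-1/2}` is
strictly decreasing, so `U^λ < U` below the critical radius `√(1 + ‖p‖²)` and `U^λ > U` above it.
-/

section Kelvin

variable {E : Type*} [NormedAddCommGroup E] [InnerProductSpace ℝ E]

def kelvin (lam : ℝ) (u : E → ℝ) (y : E) : ℝ :=
  (lam / ‖y‖) * u ((lam ^ 2 / ‖y‖ ^ 2) • y)

def bubble (p : E) (y : E) : ℝ :=
  (Real.sqrt (1 + ‖y - p‖ ^ 2))⁻¹

theorem div_sq_mul_one_add_norm_smul_sub_sq {lam : ℝ} (hlam : lam ≠ 0) (p : E) {y : E}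
    (hy : y ≠ 0) :
    (‖y‖ / lam) ^ 2 * (1 + ‖(lam ^ 2 / ‖y‖ ^ 2) • y - p‖ ^ 2) =
      1 + ‖y - p‖ ^ 2 + (1 + ‖p‖ ^ 2 - lam ^ 2) * (‖y‖ ^ 2 / lam ^ 2 - 1) := by
  have hr : ‖y‖ ≠ 0 := norm_ne_zero_iff.mpr hy
  rw [norm_sub_sq_real, norm_sub_sq_real, norm_smul, real_inner_smul_left, Real.norm_eq_abs,
    abs_of_nonneg (by positivity)]
  field_simp
  ring

theorem kelvin_bubble {lam : ℝ} (hlam : 0 < lam) (p : E) {y : E} (hy : y ≠ 0) :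
    kelvin lam (bubble p) y =
      (Real.sqrt (1 + ‖y - p‖ ^ 2 + (1 + ‖p‖ ^ 2 - lam ^ 2) * (‖y‖ ^ 2 / lam ^ 2 - 1)))⁻¹ := by
  have hinv : lam / ‖y‖ = (Real.sqrt ((‖y‖ / lam) ^ 2))⁻¹ := by
    rw [Real.sqrt_sq (by positivity), inv_div]
  rw [kelvin, bubble, hinv, ← mul_inv, ← Real.sqrt_mul (by positivity),
    div_sq_mul_one_add_norm_smul_sub_sq hlam.ne' p hy]

theorem kelvin_bubble_lt_bubble {lam : ℝ} (hlam : 0 < lam) (p : E) (hcrit : lam ^ 2 < 1 + ‖p‖ ^ 2)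
    {y : E} (hy : lam < ‖y‖) : kelvin lam (bubble p) y < bubble p y := by
  have hy0 : y ≠ 0 := norm_pos_iff.mp (hlam.trans hy)
  have hout : 0 < ‖y‖ ^ 2 / lam ^ 2 - 1 := by
    rw [sub_pos, one_lt_div (by positivity)]
    gcongr
  rw [kelvin_bubble hlam p hy0, bubble]
  gcongr (Real.sqrt ?_)⁻¹
  exact lt_add_of_pos_right _ (mul_pos (sub_pos.mpr hcrit) hout)

theorem bubble_lt_kelvin_bubble {lam : ℝ} (hlam : 0 < lam) (p : E) (hcrit : 1 + ‖p‖ ^ 2 < lam ^ 2)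
    {y : E} (hy : lam < ‖y‖) : bubble p y < kelvin lam (bubble p) y := by
  have hy0 : y ≠ 0 := norm_pos_iff.mp (hlam.trans hy)
  have hout : 0 < ‖y‖ ^ 2 / lam ^ 2 - 1 := by
    rw [sub_pos, one_lt_div (by positivity)]
    gcongr
  have hrad : 0 < 1 + ‖y - p‖ ^ 2 + (1 + ‖p‖ ^ 2 - lam ^ 2) * (‖y‖ ^ 2 / lam ^ 2 - 1) := by
    rw [← div_sq_mul_one_add_norm_smul_sub_sq hlam.ne' p hy0]
    positivity
  rw [kelvin_bubble hlam p hy0, bubble]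
  gcongr (Real.sqrt ?_)⁻¹
  exact add_lt_of_neg_right _ (mul_neg_of_neg_of_pos (sub_neg.mpr hcrit) hout)

end Kelvin

theorem stmt8_general (c₀ : ℝ) (U₁ : E3 → ℝ)
    (hUdef : ∀ y : E3, U₁ y = (Real.sqrt (1 + ‖y - c₀ • e3‖ ^ 2))⁻¹) :
    (∀ lam : ℝ, 0 < lam → lam < Real.sqrt (1 + c₀ ^ 2) → ∀ y : E3, lam < ‖y‖ →
      (lam / ‖y‖) * U₁ ((lam ^ 2 / ‖y‖ ^ 2) • y) < U₁ y) ∧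
    (∀ lam : ℝ, Real.sqrt (1 + c₀ ^ 2) < lam → ∀ y : E3, lam < ‖y‖ →
      U₁ y < (lam / ‖y‖) * U₁ ((lam ^ 2 / ‖y‖ ^ 2) • y)) := by
  obtain rfl : U₁ = bubble (c₀ • e3) := funext hUdef
  have hp : ‖c₀ • e3‖ ^ 2 = c₀ ^ 2 := by
    simp [norm_smul, e3]
  refine ⟨fun lam hlam hcrit y hy => ?_, fun lam hcrit y hy => ?_⟩
  · refine kelvin_bubble_lt_bubble hlam _ ?_ hy
    rwa [hp, ← Real.lt_sqrt hlam.le]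
  · have hlam : 0 < lam := (Real.sqrt_nonneg _).trans_lt hcrit
    refine bubble_lt_kelvin_bubble hlam _ ?_ hy
    rwa [hp, ← Real.sqrt_lt' hlam]

/-- Comparison of `U₁` with its Kelvin transform `U₁^λ`, critical radius `√(1+c₀²)`. -/
theorem stmt8 (c₀ : ℝ) (hc₀ : 0 ≤ c₀) (U₁ : E3 → ℝ)
    (hUdef : ∀ y : E3, U₁ y = (Real.sqrt (1 + ‖y - c₀ • e3‖ ^ 2))⁻¹) :
    (∀ lam : ℝ, 0 < lam → lam < Real.sqrt (1 + c₀ ^ 2) → ∀ y : E3, lam < ‖y‖ →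
      (lam / ‖y‖) * U₁ ((lam ^ 2 / ‖y‖ ^ 2) • y) < U₁ y) ∧
    (∀ lam : ℝ, Real.sqrt (1 + c₀ ^ 2) < lam → ∀ y : E3, lam < ‖y‖ →
      U₁ y < (lam / ‖y‖) * U₁ ((lam ^ 2 / ‖y‖ ^ 2) • y)) :=
  stmt8_general c₀ U₁ hUdef
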